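/- For every pair s = (s¹, s²) of vectors in ℂ⁴, define the 4×4 complex matrices ω̂^{AB} := (1/4) Σ_{μ,ν} ω^{AB}_{μν} Γ^{μν} for A, B ∈ {1,2}. Then the matrix commutators satisfy [ω̂^{12}, ω̂^{11}] = μ_s ω̂^{11}, [ω̂^{12}, ω̂^{22}] = −μ_s ω̂^{22}, and [ω̂^{11}, ω̂^{22}] = −2 μ_s ω̂^{12}. -/

import Mathlib

open Matrix

noncomputable section

/-- The mostly-minus Minkowski metric η = diag(1,−1,−1,−1,−1) (equal to its own inverse). -/
def eta (μ ν : Fin 5) : ℂ := if μ = ν then (if μ = 0 then 1 else -1) else 0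

/-- Γ_{μν} := (1/2)(Γ_μ Γ_ν − Γ_ν Γ_μ). -/
def comm2 (Γ : Fin 5 → Matrix (Fin 4) (Fin 4) ℂ) (μ ν : Fin 5) : Matrix (Fin 4) (Fin 4) ℂ :=
  (1/2 : ℂ) • (Γ μ * Γ ν - Γ ν * Γ μ)

/-- s̄₁ s₂ := s₁ᵀ C s₂. -/
def bil (Cm : Matrix (Fin 4) (Fin 4) ℂ) (s₁ s₂ : Fin 4 → ℂ) : ℂ := s₁ ⬝ᵥ Cm *ᵥ s₂

/-- s̄₁ M s₂ := s₁ᵀ C M s₂. -/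
def bilM (Cm M : Matrix (Fin 4) (Fin 4) ℂ) (s₁ s₂ : Fin 4 → ℂ) : ℂ := s₁ ⬝ᵥ Cm *ᵥ M *ᵥ s₂

/-- The 2×2 symplectic form ε with ε_{12} = 1 (indices 0,1 standing for 1,2). -/
def eps2 (A B : Fin 2) : ℂ := if A = 0 ∧ B = 1 then 1 else if A = 1 ∧ B = 0 then -1 else 0

/-- The scalar bilinear μ_s := ε_{AB} s̄ᴬ sᴮ. -/
def muS (Cm : Matrix (Fin 4) (Fin 4) ℂ) (s : Fin 2 → Fin 4 → ℂ) : ℂ :=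
  ∑ A, ∑ B, eps2 A B * bil Cm (s A) (s B)

/-- The Dirac current with lowered index, κ_{s,μ} := ε_{AB} s̄ᴬ Γ_μ sᴮ. -/
def kappaLow (Γ : Fin 5 → Matrix (Fin 4) (Fin 4) ℂ) (Cm : Matrix (Fin 4) (Fin 4) ℂ)
    (s : Fin 2 → Fin 4 → ℂ) (μ : Fin 5) : ℂ :=
  ∑ A, ∑ B, eps2 A B * bilM Cm (Γ μ) (s A) (s B)

/-- The Dirac current with raised index, κ_s^μ := η^{μμ} κ_{s,μ} = ε_{AB} s̄ᴬ Γ^μ sᴮ. -/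
def kappaUp (Γ : Fin 5 → Matrix (Fin 4) (Fin 4) ℂ) (Cm : Matrix (Fin 4) (Fin 4) ℂ)
    (s : Fin 2 → Fin 4 → ℂ) (μ : Fin 5) : ℂ :=
  eta μ μ * kappaLow Γ Cm s μ

/-- The 2-form bilinears ω^{AB}_{μν} := s̄ᴬ Γ_{μν} sᴮ. -/
def omegaS (Γ : Fin 5 → Matrix (Fin 4) (Fin 4) ℂ) (Cm : Matrix (Fin 4) (Fin 4) ℂ)
    (s : Fin 2 → Fin 4 → ℂ) (A B : Fin 2) (μ ν : Fin 5) : ℂ :=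
  bilM Cm (comm2 Γ μ ν) (s A) (s B)

/-- ω̂^{AB} := (1/4) Σ_{μ,ν} ω^{AB}_{μν} Γ^{μν}. -/
def omegaHat (Γ : Fin 5 → Matrix (Fin 4) (Fin 4) ℂ) (Cm : Matrix (Fin 4) (Fin 4) ℂ)
    (s : Fin 2 → Fin 4 → ℂ) (A B : Fin 2) : Matrix (Fin 4) (Fin 4) ℂ :=
  (1/4 : ℂ) • ∑ μ, ∑ ν, (omegaS Γ Cm s A B μ ν * eta μ μ * eta ν ν) • comm2 Γ μ ν


/-! ### Auxiliary machinery -/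

abbrev V4 := Matrix (Fin 4) (Fin 4) ℂ

lemma eta_diag_ne (μ : Fin 5) : eta μ μ ≠ 0 := by
  fin_cases μ <;> norm_num [eta, Fin.ext_iff]

lemma eta_sq (μ : Fin 5) : eta μ μ * eta μ μ = 1 := by
  fin_cases μ <;> norm_num [eta, Fin.ext_iff]

lemma exists_fourth : ∀ μ ρ σ : Fin 5, ∃ τ : Fin 5, τ ≠ μ ∧ τ ≠ ρ ∧ τ ≠ σ := by decide

lemma sum_pair {α : Type*} [AddCommMonoid α] (g : Fin 5 → Fin 5 → α) (ρ σ : Fin 5) (hρσ : ρ ≠ σ)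
    (h : ∀ μ ν, ¬(μ = ρ ∧ ν = σ) → ¬(μ = σ ∧ ν = ρ) → g μ ν = 0) :
    ∑ μ, ∑ ν, g μ ν = g ρ σ + g σ ρ := by
  have hrow : ∀ μ, ∑ ν, g μ ν = (if μ = ρ then g ρ σ else 0) + (if μ = σ then g σ ρ else 0) := by
    intro μ
    by_cases h1 : μ = ρ
    · subst h1; rw [if_pos rfl, if_neg hρσ, add_zero]
      apply Finset.sum_eq_single σ
      · intro ν _ hν; exact h _ _ (by tauto) (by tauto)
      · simp
    · by_cases h2 : μ = σ
      · subst h2; rw [if_neg h1, if_pos rfl, zero_add]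
        apply Finset.sum_eq_single ρ
        · intro ν _ hν; exact h _ _ (by tauto) (by tauto)
        · simp
      · rw [if_neg h1, if_neg h2, add_zero]
        apply Finset.sum_eq_zero
        intro ν _; exact h _ _ (by tauto) (by tauto)
  rw [Finset.sum_congr rfl (fun μ _ => hrow μ), Finset.sum_add_distrib]
  simp

abbrev Idx := Unit ⊕ (Fin 5) ⊕ {p : Fin 5 × Fin 5 // p.1 < p.2}

def Bfam (Γ : Fin 5 → Matrix (Fin 4) (Fin 4) ℂ) : Idx → V4 :=
  Sum.elim (fun _ => 1) (Sum.elim Γ (fun p => Γ p.1.1 * Γ p.1.2))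

def Dfam (Γ : Fin 5 → Matrix (Fin 4) (Fin 4) ℂ) : Idx → V4 :=
  Sum.elim (fun _ => 1) (Sum.elim Γ (fun p => Γ p.1.2 * Γ p.1.1))

def nIdx : Idx → ℂ :=
  Sum.elim (fun _ => 4) (Sum.elim (fun μ => 4 * eta μ μ)
    (fun p => 4 * eta p.1.1 p.1.1 * eta p.1.2 p.1.2))

lemma nIdx_ne (i : Idx) : nIdx i ≠ 0 := by
  rcases i with ⟨⟩ | μ | ⟨⟨μ₁, μ₂⟩, hμ⟩ <;> simp only [nIdx, Sum.elim_inl, Sum.elim_inr]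
  · norm_num
  · exact mul_ne_zero (by norm_num) (eta_diag_ne μ)
  · exact mul_ne_zero (mul_ne_zero (by norm_num) (eta_diag_ne μ₁)) (eta_diag_ne μ₂)

lemma card_Idx : Fintype.card Idx = 16 := by decide

def Pm (Cm : Matrix (Fin 4) (Fin 4) ℂ) (s : Fin 2 → Fin 4 → ℂ) (A B : Fin 2) : V4 :=
  vecMulVec (s B) ((s A) ᵥ* Cm)

lemma vecMulVec_mul' (x y : Fin 4 → ℂ) (N : V4) :
    vecMulVec x y * N = vecMulVec x (y ᵥ* N) := by
  ext i j
  simp [mul_apply, vecMulVec_apply, vecMul, dotProduct, Finset.mul_sum, mul_assoc]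

lemma trace_vecMulVec (x y : Fin 4 → ℂ) : trace (vecMulVec x y) = x ⬝ᵥ y := by
  rw [vecMulVec_eq (Fin 1), trace_replicateCol_mul_replicateRow]

lemma vecMulVec_mul_vecMulVec (x y u v : Fin 4 → ℂ) :
    vecMulVec x y * vecMulVec u v = (y ⬝ᵥ u) • vecMulVec x v := by
  ext i j
  simp only [mul_apply, vecMulVec_apply, Matrix.smul_apply, smul_eq_mul, dotProduct,
    Finset.sum_mul, Finset.mul_sum]
  apply Finset.sum_congr rfl
  intro k _; ring

lemma dot_flip (A : V4) (u v : Fin 4 → ℂ) : u ⬝ᵥ A *ᵥ v = v ⬝ᵥ Aᵀ *ᵥ u := by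
  rw [dotProduct_mulVec, Matrix.mulVec_transpose, dotProduct_comm]

lemma trace_Pm (Cm : Matrix (Fin 4) (Fin 4) ℂ) (s : Fin 2 → Fin 4 → ℂ) (A B : Fin 2) :
    trace (Pm Cm s A B) = bil Cm (s A) (s B) := by
  rw [Pm, trace_vecMulVec, dotProduct_comm, bil, dotProduct_mulVec]

lemma trace_Pm_mul (Cm : Matrix (Fin 4) (Fin 4) ℂ) (s : Fin 2 → Fin 4 → ℂ) (A B : Fin 2)
    (N : V4) : trace (Pm Cm s A B * N) = bilM Cm N (s A) (s B) := by
  rw [Pm, vecMulVec_mul', trace_vecMulVec, bilM, Matrix.mulVec_mulVec, dotProduct_mulVec,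
    Matrix.vecMul_vecMul, dotProduct_comm]

lemma Pm_mul (Cm : Matrix (Fin 4) (Fin 4) ℂ) (s : Fin 2 → Fin 4 → ℂ) (A B C D : Fin 2) :
    Pm Cm s A B * Pm Cm s C D = bil Cm (s A) (s D) • Pm Cm s C B := by
  rw [Pm, Pm, Pm, vecMulVec_mul_vecMulVec, bil, dotProduct_mulVec]

lemma bilM_eq (Cm N : V4) (u v : Fin 4 → ℂ) : bilM Cm N u v = u ⬝ᵥ (Cm * N) *ᵥ v := by
  rw [bilM, Matrix.mulVec_mulVec]

lemma bilM_neg (Cm N : V4) (u v : Fin 4 → ℂ) : bilM Cm (-N) u v = -(bilM Cm N u v) := by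
  simp [bilM, Matrix.neg_mulVec, Matrix.mulVec_neg, dotProduct_neg]

section withG
variable (Γ : Fin 5 → Matrix (Fin 4) (Fin 4) ℂ)
variable (hC : ∀ μ ν, Γ μ * Γ ν + Γ ν * Γ μ = (2 * eta μ ν) • (1 : Matrix (Fin 4) (Fin 4) ℂ))
include hC

lemma sqG (μ : Fin 5) : Γ μ * Γ μ = eta μ μ • 1 := by
  have h := hC μ μ
  have h2 : (2:ℂ) • (Γ μ * Γ μ) = (2:ℂ) • (eta μ μ • (1:V4)) := by
    rw [two_smul, h, smul_smul]
  exact smul_right_injective V4 (by norm_num) h2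

lemma anti {μ ν : Fin 5} (h : μ ≠ ν) : Γ μ * Γ ν = -(Γ ν * Γ μ) := by
  have h1 := hC μ ν
  have h2 : eta μ ν = 0 := by simp [eta, h]
  rw [h2] at h1
  simp at h1
  linear_combination (norm := noncomm_ring) h1

omit hC in
lemma comm2_diag (μ : Fin 5) : comm2 Γ μ μ = 0 := by simp [comm2]

omit hC in
lemma comm2_swap (μ ν : Fin 5) : comm2 Γ ν μ = -(comm2 Γ μ ν) := by
  simp only [comm2]; module

lemma comm2_eq {μ ν : Fin 5} (h : μ ≠ ν) : comm2 Γ μ ν = Γ μ * Γ ν := by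
  rw [comm2, anti Γ hC h]
  rw [show -(Γ ν * Γ μ) - Γ ν * Γ μ = (2:ℂ) • -(Γ ν * Γ μ) by module]
  rw [← anti Γ hC h, smul_smul]; norm_num

lemma trace_anticomm (σ : Fin 5) (A : V4) (h : Γ σ * A = -(A * Γ σ)) : trace A = 0 := by
  have h1 : trace (Γ σ * A * Γ σ) = eta σ σ * trace A := by
    rw [trace_mul_comm, ← mul_assoc, sqG Γ hC, smul_mul_assoc, one_mul, trace_smul, smul_eq_mul]
  have h2 : Γ σ * A * Γ σ = -(eta σ σ • A) := by
    rw [h, neg_mul, mul_assoc, sqG Γ hC, mul_smul_comm, mul_one]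
  rw [h2, trace_neg, trace_smul, smul_eq_mul] at h1
  have h3 : eta σ σ * trace A = 0 := by linear_combination (-(1:ℂ)/2) * h1
  rcases mul_eq_zero.mp h3 with h | h
  · exact absurd h (eta_diag_ne σ)
  · exact h

lemma trG (μ : Fin 5) : trace (Γ μ) = 0 := by
  set σ : Fin 5 := if μ = 0 then 1 else 0 with hσ
  have hne : σ ≠ μ := by
    by_cases h : μ = 0 <;> simp [hσ, h] <;> omega
  exact trace_anticomm Γ hC σ (Γ μ) (anti Γ hC hne)

lemma trGG {μ ν : Fin 5} (h : μ ≠ ν) : trace (Γ μ * Γ ν) = 0 := by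
  have h1 : trace (Γ μ * Γ ν) = trace (Γ ν * Γ μ) := trace_mul_comm _ _
  rw [show Γ ν * Γ μ = -(Γ μ * Γ ν) from anti Γ hC (Ne.symm h), trace_neg] at h1
  linear_combination ((1:ℂ)/2) * h1

lemma trGG' (μ ν : Fin 5) : trace (Γ μ * Γ ν) = 4 * eta μ ν := by
  by_cases h : μ = ν
  · subst h; rw [sqG Γ hC, trace_smul, trace_one, smul_eq_mul]; simp [mul_comm]
  · rw [trGG Γ hC h]; simp [eta, h]

lemma swapG {a b : Fin 5} (h : a ≠ b) (X : V4) :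
    Γ a * (Γ b * X) = -(Γ b * (Γ a * X)) := by
  rw [← mul_assoc, anti Γ hC h, neg_mul, mul_assoc]

lemma trace_three (μ ρ σ : Fin 5) (hρσ : ρ ≠ σ) : trace (Γ μ * (Γ ρ * Γ σ)) = 0 := by
  by_cases h1 : μ = ρ
  · subst h1
    rw [← mul_assoc, sqG Γ hC, smul_mul_assoc, one_mul, trace_smul, trG Γ hC, smul_zero]
  · by_cases h2 : μ = σ
    · subst h2
      rw [trace_mul_comm, mul_assoc, sqG Γ hC, mul_smul_comm, mul_one, trace_smul, trG Γ hC,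
        smul_zero]
    · obtain ⟨τ, ht1, ht2, ht3⟩ := exists_fourth μ ρ σ
      apply trace_anticomm Γ hC τ
      rw [swapG Γ hC ht1, swapG Γ hC ht2, anti Γ hC ht3]
      simp only [mul_neg, neg_neg, mul_assoc]

lemma trace_four (ρ σ μ ν : Fin 5) (hρσ : ρ ≠ σ) (hμν : μ ≠ ν) :
    trace (Γ ρ * Γ σ * (Γ μ * Γ ν)) =
      (if ρ = ν ∧ σ = μ then 4 * eta ρ ρ * eta σ σ
       else if ρ = μ ∧ σ = ν then -(4 * eta ρ ρ * eta σ σ) else 0) := by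
  by_cases h1 : ρ = μ
  · subst h1
    by_cases h2 : σ = ν
    · subst h2
      have e : Γ ρ * Γ σ * (Γ ρ * Γ σ) = -((eta ρ ρ * eta σ σ) • 1) := by
        calc Γ ρ * Γ σ * (Γ ρ * Γ σ) = Γ ρ * (Γ σ * Γ ρ) * Γ σ := by noncomm_ring
        _ = Γ ρ * (-(Γ ρ * Γ σ)) * Γ σ := by rw [anti Γ hC (Ne.symm hρσ)]
        _ = -(Γ ρ * Γ ρ * (Γ σ * Γ σ)) := by noncomm_ring
        _ = -((eta ρ ρ * eta σ σ) • 1) := by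
            rw [sqG Γ hC, sqG Γ hC, smul_mul_assoc, one_mul, smul_smul]
      rw [e, trace_neg, trace_smul, trace_one]
      rw [if_neg (by rintro ⟨h, -⟩; exact hρσ h), if_pos ⟨rfl, rfl⟩]
      simp [Fintype.card_fin]; ring
    · have e : Γ ρ * Γ σ * (Γ ρ * Γ ν) = -(eta ρ ρ • (Γ σ * Γ ν)) := by
        calc Γ ρ * Γ σ * (Γ ρ * Γ ν) = Γ ρ * (Γ σ * Γ ρ) * Γ ν := by noncomm_ring
        _ = Γ ρ * (-(Γ ρ * Γ σ)) * Γ ν := by rw [anti Γ hC (Ne.symm hρσ)]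
        _ = -(Γ ρ * Γ ρ * (Γ σ * Γ ν)) := by noncomm_ring
        _ = -(eta ρ ρ • (Γ σ * Γ ν)) := by rw [sqG Γ hC, smul_mul_assoc, one_mul]
      rw [e, trace_neg, trace_smul, trGG Γ hC h2, smul_zero, neg_zero]
      rw [if_neg (by rintro ⟨rfl, rfl⟩; exact hμν rfl), if_neg (by rintro ⟨-, h⟩; exact h2 h)]
  · by_cases h2 : σ = ν
    · subst h2
      have e : Γ ρ * Γ σ * (Γ μ * Γ σ) = -(eta σ σ • (Γ ρ * Γ μ)) := by
        calc Γ ρ * Γ σ * (Γ μ * Γ σ) = Γ ρ * Γ σ * (-(Γ σ * Γ μ)) := by rw [anti Γ hC hμν]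
        _ = -(Γ ρ * (Γ σ * Γ σ) * Γ μ) := by noncomm_ring
        _ = -(eta σ σ • (Γ ρ * Γ μ)) := by
            rw [sqG Γ hC, mul_smul_comm, mul_one, smul_mul_assoc]
      rw [e, trace_neg, trace_smul, trGG Γ hC h1, smul_zero, neg_zero]
      rw [if_neg (by rintro ⟨h, -⟩; exact hρσ h), if_neg (by rintro ⟨h, -⟩; exact h1 h)]
    · by_cases h3 : ρ = ν
      · subst h3
        by_cases h4 : σ = μ
        · subst h4
          have e : Γ ρ * Γ σ * (Γ σ * Γ ρ) = (eta ρ ρ * eta σ σ) • 1 := by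
            calc Γ ρ * Γ σ * (Γ σ * Γ ρ) = Γ ρ * (Γ σ * Γ σ) * Γ ρ := by noncomm_ring
            _ = Γ ρ * (eta σ σ • 1) * Γ ρ := by rw [sqG Γ hC]
            _ = eta σ σ • (Γ ρ * Γ ρ) := by
                rw [mul_smul_comm, mul_one, smul_mul_assoc]
            _ = (eta ρ ρ * eta σ σ) • 1 := by rw [sqG Γ hC, smul_smul, mul_comm]
          rw [e, trace_smul, trace_one, if_pos ⟨rfl, rfl⟩]
          simp [Fintype.card_fin]; ring
        · have t1 : trace (Γ ρ * Γ σ * (Γ μ * Γ ρ)) = trace ((Γ μ * Γ ρ) * (Γ ρ * Γ σ)) :=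
            trace_mul_comm _ _
          have e : (Γ μ * Γ ρ) * (Γ ρ * Γ σ) = eta ρ ρ • (Γ μ * Γ σ) := by
            calc (Γ μ * Γ ρ) * (Γ ρ * Γ σ) = Γ μ * (Γ ρ * Γ ρ) * Γ σ := by noncomm_ring
            _ = eta ρ ρ • (Γ μ * Γ σ) := by
                rw [sqG Γ hC, mul_smul_comm, mul_one, smul_mul_assoc]
          rw [t1, e, trace_smul, trGG Γ hC (fun h => h4 h.symm), smul_zero]
          rw [if_neg (by rintro ⟨-, h⟩; exact h4 h), if_neg (by rintro ⟨h, -⟩; exact h1 h)]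
      · by_cases h4 : σ = μ
        · subst h4
          have e : Γ ρ * Γ σ * (Γ σ * Γ ν) = eta σ σ • (Γ ρ * Γ ν) := by
            calc Γ ρ * Γ σ * (Γ σ * Γ ν) = Γ ρ * (Γ σ * Γ σ) * Γ ν := by noncomm_ring
            _ = eta σ σ • (Γ ρ * Γ ν) := by
                rw [sqG Γ hC, mul_smul_comm, mul_one, smul_mul_assoc]
          rw [e, trace_smul, trGG Γ hC h3, smul_zero]
          rw [if_neg (by rintro ⟨h, -⟩; exact h3 h), if_neg (by rintro ⟨h, -⟩; exact h1 h)]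
        · have key : Γ ρ * (Γ σ * (Γ μ * Γ ν)) = -(Γ σ * (Γ μ * Γ ν) * Γ ρ) := by
            rw [swapG Γ hC hρσ, swapG Γ hC h1, anti Γ hC h3]
            simp only [mul_neg, neg_neg, mul_assoc]
          have t1 : trace (Γ ρ * (Γ σ * (Γ μ * Γ ν))) = trace ((Γ σ * (Γ μ * Γ ν)) * Γ ρ) :=
            trace_mul_comm _ _
          rw [key, trace_neg] at t1
          rw [mul_assoc, key, trace_neg]
          rw [if_neg (by rintro ⟨h, -⟩; exact h3 h), if_neg (by rintro ⟨h, -⟩; exact h1 h)]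
          linear_combination ((1:ℂ)/2) * t1

lemma trace_comm2 (μ ν : Fin 5) : trace (comm2 Γ μ ν) = 0 := by
  by_cases h : μ = ν
  · subst h; rw [comm2_diag, trace_zero]
  · rw [comm2_eq Γ hC h, trGG Γ hC h]

lemma trace_comm2_G (μ ν ρ : Fin 5) : trace (comm2 Γ μ ν * Γ ρ) = 0 := by
  by_cases h : μ = ν
  · subst h; rw [comm2_diag, zero_mul, trace_zero]
  · rw [comm2_eq Γ hC h, trace_mul_comm, trace_three Γ hC ρ μ ν h]

lemma pairing (i j : Idx) : trace (Bfam Γ i * Dfam Γ j) = if i = j then nIdx i else 0 := by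
  rcases i with ⟨⟩ | μ | ⟨⟨μ₁, μ₂⟩, hμ⟩ <;> rcases j with ⟨⟩ | ν | ⟨⟨ν₁, ν₂⟩, hν⟩ <;>
    simp only [Bfam, Dfam, nIdx, Sum.elim_inl, Sum.elim_inr, one_mul, mul_one]
  · simp [Fintype.card_fin]
  · simp [trG Γ hC]
  · simp [trGG Γ hC hν.ne']
  · simp [trG Γ hC]
  · rw [trGG' Γ hC]
    by_cases h : μ = ν
    · subst h; simp
    · simp [eta, h, Ne.symm h]
  · simp [trace_three Γ hC μ ν₂ ν₁ hν.ne']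
  · simp [trGG Γ hC hμ.ne]
  · rw [trace_mul_comm, trace_three Γ hC ν μ₁ μ₂ hμ.ne]
    simp
  · rw [trace_four Γ hC _ _ _ _ hμ.ne hν.ne']
    have h2 : ¬(μ₁ = ν₂ ∧ μ₂ = ν₁) := by
      rintro ⟨rfl, rfl⟩; exact absurd (hμ.trans hν) (lt_irrefl _)
    by_cases h1 : μ₁ = ν₁ ∧ μ₂ = ν₂
    · obtain ⟨rfl, rfl⟩ := h1; simp
    · rw [if_neg (by simpa using h1), if_neg (by simpa using h2),
        if_neg (by simp only [Sum.inr.injEq, Subtype.mk.injEq, Prod.mk.injEq]; exact h1)]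

lemma liB : LinearIndependent ℂ (Bfam Γ) := by
  rw [Fintype.linearIndependent_iff]
  intro g hg i
  have h0 : trace ((∑ j, g j • Bfam Γ j) * Dfam Γ i) = 0 := by rw [hg, zero_mul, trace_zero]
  rw [Finset.sum_mul] at h0
  simp only [smul_mul_assoc, Matrix.trace_sum, trace_smul, smul_eq_mul] at h0
  rw [Finset.sum_eq_single i (fun j _ hj => by rw [pairing Γ hC, if_neg hj, mul_zero])
    (by simp)] at h0
  rw [pairing Γ hC, if_pos rfl] at h0
  exact (mul_eq_zero.mp h0).resolve_right (nIdx_ne i)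

noncomputable def basisG : Module.Basis Idx ℂ V4 :=
  basisOfLinearIndependentOfCardEqFinrank (liB Γ hC)
    (by rw [card_Idx, Module.finrank_matrix]; simp)

lemma eq_zero_of_pairing (Y : V4) (h : ∀ j, trace (Y * Dfam Γ j) = 0) : Y = 0 := by
  have hcoe : ⇑(basisG Γ hC) = Bfam Γ := coe_basisOfLinearIndependentOfCardEqFinrank _ _
  have hY : ∑ i, (basisG Γ hC).repr Y i • Bfam Γ i = Y := by
    rw [← hcoe]; exact Module.Basis.sum_repr _ Y
  have hre : ∀ j, (basisG Γ hC).repr Y j = 0 := by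
    intro j
    have h0 : trace ((∑ i, (basisG Γ hC).repr Y i • Bfam Γ i) * Dfam Γ j) = 0 := by
      rw [hY]; exact h j
    rw [Finset.sum_mul] at h0
    simp only [smul_mul_assoc, Matrix.trace_sum, trace_smul, smul_eq_mul] at h0
    rw [Finset.sum_eq_single j (fun i _ hi => by rw [pairing Γ hC, if_neg hi, mul_zero])
      (by simp)] at h0
    rw [pairing Γ hC, if_pos rfl] at h0
    exact (mul_eq_zero.mp h0).resolve_right (nIdx_ne j)
  rw [← hY]
  simp [hre]

end withG


section withAll
variable (Γ : Fin 5 → Matrix (Fin 4) (Fin 4) ℂ) (Cm : Matrix (Fin 4) (Fin 4) ℂ)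
variable (hC : ∀ μ ν, Γ μ * Γ ν + Γ ν * Γ μ = (2 * eta μ ν) • (1 : Matrix (Fin 4) (Fin 4) ℂ))
variable (hCt : Cmᵀ = -Cm)
variable (hCΓ : ∀ μ, Cm * Γ μ = (Γ μ)ᵀ * Cm)

include hCt in
lemma bil_anti (u v : Fin 4 → ℂ) : bil Cm u v = -(bil Cm v u) := by
  rw [bil, dot_flip, hCt, Matrix.neg_mulVec, dotProduct_neg, bil]

include hCt hCΓ in
lemma bilG_anti (μ : Fin 5) (u v : Fin 4 → ℂ) :
    bilM Cm (Γ μ) u v = -(bilM Cm (Γ μ) v u) := by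
  have ht : (Cm * Γ μ)ᵀ = -(Cm * Γ μ) := by
    rw [transpose_mul, hCt, mul_neg, ← hCΓ]
  rw [bilM_eq, dot_flip, ht, Matrix.neg_mulVec, dotProduct_neg, bilM_eq]

include hCt hCΓ in
lemma hT2 (μ ν : Fin 5) : (Cm * (Γ μ * Γ ν))ᵀ = -(Cm * (Γ ν * Γ μ)) := by
  rw [transpose_mul, transpose_mul, hCt, mul_neg, mul_assoc, ← hCΓ, ← mul_assoc, ← hCΓ,
    mul_assoc]

include hCt hCΓ in
lemma hTcomm2 (μ ν : Fin 5) : (Cm * comm2 Γ μ ν)ᵀ = Cm * comm2 Γ μ ν := by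
  rw [comm2, mul_smul_comm, transpose_smul, mul_sub, transpose_sub, hT2 Γ Cm hCt hCΓ,
    hT2 Γ Cm hCt hCΓ]
  module

include hCt hCΓ in
lemma omegaS_symm (s : Fin 2 → Fin 4 → ℂ) (A B : Fin 2) (μ ν : Fin 5) :
    omegaS Γ Cm s A B μ ν = omegaS Γ Cm s B A μ ν := by
  rw [omegaS, omegaS, bilM_eq, dot_flip, hTcomm2 Γ Cm hCt hCΓ, bilM_eq]

lemma omegaS_anti (s : Fin 2 → Fin 4 → ℂ) (A B : Fin 2) (μ ν : Fin 5) :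
    omegaS Γ Cm s A B ν μ = -(omegaS Γ Cm s A B μ ν) := by
  rw [omegaS, omegaS, comm2_swap, bilM_neg]

lemma tr_hat (s : Fin 2 → Fin 4 → ℂ) (A B : Fin 2) (N : V4) :
    trace (omegaHat Γ Cm s A B * N) =
      (1/4 : ℂ) * ∑ μ, ∑ ν, omegaS Γ Cm s A B μ ν * eta μ μ * eta ν ν *
        trace (comm2 Γ μ ν * N) := by
  rw [omegaHat, smul_mul_assoc, trace_smul, smul_eq_mul, Finset.sum_mul, Matrix.trace_sum]
  congr 1
  apply Finset.sum_congr rfl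
  intro μ _
  rw [Finset.sum_mul, Matrix.trace_sum]
  apply Finset.sum_congr rfl
  intro ν _
  rw [smul_mul_assoc, trace_smul, smul_eq_mul]

include hC hCt hCΓ in
lemma star_id (s : Fin 2 → Fin 4 → ℂ) (A B : Fin 2) :
    omegaHat Γ Cm s A B = -(Pm Cm s A B + Pm Cm s B A) := by
  have h0 : Pm Cm s A B + Pm Cm s B A + omegaHat Γ Cm s A B = 0 := by
    apply eq_zero_of_pairing Γ hC
    intro j
    rcases j with ⟨⟩ | ρ | ⟨⟨ν₁, ν₂⟩, hν⟩ <;>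
      simp only [Dfam, Sum.elim_inl, Sum.elim_inr, add_mul, trace_add]
    · rw [mul_one, mul_one, trace_Pm, trace_Pm, mul_one]
      have hz : trace (omegaHat Γ Cm s A B) = 0 := by
        have := tr_hat Γ Cm s A B 1
        rw [mul_one] at this
        rw [this]
        simp [trace_comm2 Γ hC]
      rw [hz, bil_anti Cm hCt (s A) (s B)]
      ring
    · rw [trace_Pm_mul, trace_Pm_mul, tr_hat]
      simp only [trace_comm2_G Γ hC, mul_zero, Finset.sum_const_zero]
      rw [bilG_anti Γ Cm hCt hCΓ ρ (s A) (s B)]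
      ring
    · rw [trace_Pm_mul, trace_Pm_mul, tr_hat]
      have hsum : ∑ μ, ∑ ν, omegaS Γ Cm s A B μ ν * eta μ μ * eta ν ν *
          trace (comm2 Γ μ ν * (Γ ν₂ * Γ ν₁)) =
          (omegaS Γ Cm s A B ν₁ ν₂ * eta ν₁ ν₁ * eta ν₂ ν₂ *
            trace (comm2 Γ ν₁ ν₂ * (Γ ν₂ * Γ ν₁))) +
          (omegaS Γ Cm s A B ν₂ ν₁ * eta ν₂ ν₂ * eta ν₁ ν₁ *
            trace (comm2 Γ ν₂ ν₁ * (Γ ν₂ * Γ ν₁))) := by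
        apply sum_pair _ ν₁ ν₂ hν.ne
        intro μ ν hn1 hn2
        by_cases h : μ = ν
        · subst h; rw [comm2_diag, zero_mul, trace_zero, mul_zero]
        · rw [comm2_eq Γ hC h, trace_four Γ hC μ ν ν₂ ν₁ h hν.ne',
            if_neg (by tauto), if_neg (by tauto), mul_zero]
      rw [hsum]
      have e1 : trace (comm2 Γ ν₁ ν₂ * (Γ ν₂ * Γ ν₁)) = 4 * eta ν₁ ν₁ * eta ν₂ ν₂ := by
        rw [comm2_eq Γ hC hν.ne, trace_four Γ hC ν₁ ν₂ ν₂ ν₁ hν.ne hν.ne',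
          if_pos ⟨rfl, rfl⟩]
      have e2 : trace (comm2 Γ ν₂ ν₁ * (Γ ν₂ * Γ ν₁)) = -(4 * eta ν₂ ν₂ * eta ν₁ ν₁) := by
        rw [comm2_eq Γ hC hν.ne', trace_four Γ hC ν₂ ν₁ ν₂ ν₁ hν.ne' hν.ne',
          if_neg (by rintro ⟨h, -⟩; exact hν.ne' h), if_pos ⟨rfl, rfl⟩]
      have e3 : bilM Cm (Γ ν₂ * Γ ν₁) (s A) (s B) = -(omegaS Γ Cm s A B ν₁ ν₂) := by
        rw [← comm2_eq Γ hC hν.ne', ← omegaS, omegaS_anti]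
      have e4 : bilM Cm (Γ ν₂ * Γ ν₁) (s B) (s A) = -(omegaS Γ Cm s A B ν₁ ν₂) := by
        rw [← comm2_eq Γ hC hν.ne', ← omegaS, omegaS_anti,
          omegaS_symm Γ Cm hCt hCΓ s B A ν₁ ν₂]
      have e5 : omegaS Γ Cm s A B ν₂ ν₁ = -(omegaS Γ Cm s A B ν₁ ν₂) :=
        omegaS_anti Γ Cm s A B ν₁ ν₂
      rw [e1, e2, e3, e4, e5]
      have q1 := eta_sq ν₁
      have q2 := eta_sq ν₂
      set w := omegaS Γ Cm s A B ν₁ ν₂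
      set a := eta ν₁ ν₁
      set b := eta ν₂ ν₂
      linear_combination (2 * w * b * b) * q1 + (2 * w) * q2
  exact eq_neg_of_add_eq_zero_right h0

end withAll

/-- The commutators of the endomorphisms ω̂^{AB} (with A,B ∈ {1,2} encoded as {0,1}):
    [ω̂^{12}, ω̂^{11}] = μ_s ω̂^{11}, [ω̂^{12}, ω̂^{22}] = −μ_s ω̂^{22},
    [ω̂^{11}, ω̂^{22}] = −2μ_s ω̂^{12}. -/
theorem omega_hat_commutators (Γ : Fin 5 → Matrix (Fin 4) (Fin 4) ℂ)
    (Cm : Matrix (Fin 4) (Fin 4) ℂ)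
    (hC : ∀ μ ν, Γ μ * Γ ν + Γ ν * Γ μ = (2 * eta μ ν) • (1 : Matrix (Fin 4) (Fin 4) ℂ))
    (hvol : Γ 0 * Γ 1 * Γ 2 * Γ 3 * Γ 4 = 1)
    (hCt : Cmᵀ = -Cm)
    (hCΓ : ∀ μ, Cm * Γ μ = (Γ μ)ᵀ * Cm)
    (s : Fin 2 → Fin 4 → ℂ) :
    (omegaHat Γ Cm s 0 1 * omegaHat Γ Cm s 0 0
        - omegaHat Γ Cm s 0 0 * omegaHat Γ Cm s 0 1
      = muS Cm s • omegaHat Γ Cm s 0 0) ∧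
    (omegaHat Γ Cm s 0 1 * omegaHat Γ Cm s 1 1
        - omegaHat Γ Cm s 1 1 * omegaHat Γ Cm s 0 1
      = - muS Cm s • omegaHat Γ Cm s 1 1) ∧
    (omegaHat Γ Cm s 0 0 * omegaHat Γ Cm s 1 1
        - omegaHat Γ Cm s 1 1 * omegaHat Γ Cm s 0 0
      = (-2 : ℂ) • (muS Cm s • omegaHat Γ Cm s 0 1)) := by
  have hstar := star_id Γ Cm hC hCt hCΓ s
  have hPmul := Pm_mul Cm s
  have hb00 : bil Cm (s 0) (s 0) = 0 := by
    have h := bil_anti Cm hCt (s 0) (s 0); linear_combination ((1:ℂ)/2) * h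
  have hb11 : bil Cm (s 1) (s 1) = 0 := by
    have h := bil_anti Cm hCt (s 1) (s 1); linear_combination ((1:ℂ)/2) * h
  have hb10 : bil Cm (s 1) (s 0) = -(bil Cm (s 0) (s 1)) :=
    bil_anti Cm hCt (s 1) (s 0)
  have hmu : muS Cm s = 2 * bil Cm (s 0) (s 1) := by
    simp [muS, Fin.sum_univ_two, eps2, hb10]
    ring
  refine ⟨?_, ?_, ?_⟩ <;>
  · simp only [hmu, hstar, neg_mul, mul_neg, neg_neg, add_mul, mul_add, hPmul, hb00, hb11,
      hb10, zero_smul, neg_smul, smul_neg, smul_add, zero_add, add_zero]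
    module
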